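/- Nonexistence under too-fast decay: Let $K\in\mathscr{C}^\infty(E_*)$ be positive. If there exists $a\in(0,1)$ such that $K(\xi)\leq a(m-1)/\|\xi\|$ for all $\xi\in E_*$, then the equation $A^{ab}(u)\tilde D_{ab}u = -v_2 + (m-1)(1+v) - (1+v)^{3/2}e^uK(e^u\xi)$ admits no solution $u\in\mathscr{C}^2(\Sigma)$; i.e. there is no $\mathscr{C}^2$ radial graph over $\Sigma$ with mean curvature $K$. The same conclusion holds if there exists $b>1$ with $K(\xi)\geq b(m-1)/\|\xi\|$ for all $\xi\in E_*$. -/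

import Mathlib

/-!
STATEMENT 11.  Nonexistence under too-fast decay (or too-slow decay).

Component model of the full prescribed mean curvature equation on the compact unit
sphere bundle `Σ` (type `S`) of a rank-`m ≥ 2` Riemannian vector bundle: indices
`a : Fin (n+m-1)` with `μ a ∈ {0,1}` (horizontal/vertical), inverse metric components
`Ginv`, rescaled derivatives `D̃`, `v = v₁ + v₂`, `Aᵃᵇ(u) = (1+v)Gᵃᵇ - D̃ᵃu D̃ᵇu`, and
`K r ξ` encoding `K(rξ)`.  A `C²` solution is a triple `(u, Du, D2u)` of the function
and its frame derivatives satisfying the maximum-principle properties of a `C²` function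
on the compact manifold `Σ` and the equation
`Aᵃᵇ(u)D̃_{ab}u = -v₂ + (m-1)(1+v) - (1+v)^{3/2} e^u K(e^u ξ)`.

Claim: if there is `a₀ ∈ (0,1)` with `K(ξ) ≤ a₀(m-1)/‖ξ‖` on `E_*`, or `b₀ > 1` with
`K(ξ) ≥ b₀(m-1)/‖ξ‖` on `E_*`, then the equation has no `C²` solution, i.e. there is no
`C²` radial graph over `Σ` with mean curvature `K`.
-/

noncomputable section

open scoped BigOperators

variable {S : Type} {N : ℕ}

/-- Rescaled lowered derivative `D̃_a u = e^{μ_a u} D_a u`. -/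
def tDlow (μ : Fin N → ℝ) (u : S → ℝ) (Du : S → Fin N → ℝ) (ξ : S) (a : Fin N) : ℝ :=
  Real.exp (μ a * u ξ) * Du ξ a

/-- Rescaled raised derivative `D̃ᵃ u = e^{μ_a u} Gᵃᵇ D_b u`. -/
def tDup (Ginv : S → Fin N → Fin N → ℝ) (μ : Fin N → ℝ) (u : S → ℝ)
    (Du : S → Fin N → ℝ) (ξ : S) (a : Fin N) : ℝ :=
  Real.exp (μ a * u ξ) * ∑ b, Ginv ξ a b * Du ξ b

/-- Vertical rescaled gradient square `v₁ = (1-μ_a) D̃_a u D̃ᵃ u`. -/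
def vv1 (Ginv : S → Fin N → Fin N → ℝ) (μ : Fin N → ℝ) (u : S → ℝ)
    (Du : S → Fin N → ℝ) (ξ : S) : ℝ :=
  ∑ a, (1 - μ a) * tDlow μ u Du ξ a * tDup Ginv μ u Du ξ a

/-- Horizontal rescaled gradient square `v₂ = μ_a D̃_a u D̃ᵃ u`. -/
def vv2 (Ginv : S → Fin N → Fin N → ℝ) (μ : Fin N → ℝ) (u : S → ℝ)
    (Du : S → Fin N → ℝ) (ξ : S) : ℝ :=
  ∑ a, μ a * tDlow μ u Du ξ a * tDup Ginv μ u Du ξ a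

/-- `v = v₁ + v₂`. -/
def vv (Ginv : S → Fin N → Fin N → ℝ) (μ : Fin N → ℝ) (u : S → ℝ)
    (Du : S → Fin N → ℝ) (ξ : S) : ℝ :=
  vv1 Ginv μ u Du ξ + vv2 Ginv μ u Du ξ

/-- Coefficients `Aᵃᵇ(u) = (1+v) Gᵃᵇ - D̃ᵃu D̃ᵇu` of the equation. -/
def Acoef (Ginv : S → Fin N → Fin N → ℝ) (μ : Fin N → ℝ) (u : S → ℝ)
    (Du : S → Fin N → ℝ) (ξ : S) (a b : Fin N) : ℝ :=
  (1 + vv Ginv μ u Du ξ) * Ginv ξ a b - tDup Ginv μ u Du ξ a * tDup Ginv μ u Du ξ b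

/-- Rescaled Hessian `D̃_{ab} u = e^{(μ_a+μ_b) u} D_{ab} u`. -/
def tD2 (μ : Fin N → ℝ) (u : S → ℝ) (D2u : S → Fin N → Fin N → ℝ)
    (ξ : S) (a b : Fin N) : ℝ :=
  Real.exp ((μ a + μ b) * u ξ) * D2u ξ a b

/-- Left-hand side `Aᵃᵇ(u) D̃_{ab}u` of the prescribed mean curvature equation. -/
def MCop (Ginv : S → Fin N → Fin N → ℝ) (μ : Fin N → ℝ) (u : S → ℝ)
    (Du : S → Fin N → ℝ) (D2u : S → Fin N → Fin N → ℝ) (ξ : S) : ℝ :=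
  ∑ a, ∑ b, Acoef Ginv μ u Du ξ a b * tD2 μ u D2u ξ a b

/-- Right-hand side `-v₂ + (m-1)(1+v) - (1+v)^{3/2} e^u K(e^u ξ)` of the equation;
here `K r ξ` stands for `K(rξ)`. -/
def RHSK (m : ℕ) (K : ℝ → S → ℝ) (Ginv : S → Fin N → Fin N → ℝ) (μ : Fin N → ℝ)
    (u : S → ℝ) (Du : S → Fin N → ℝ) (ξ : S) : ℝ :=
  -vv2 Ginv μ u Du ξ + ((m : ℝ) - 1) * (1 + vv Ginv μ u Du ξ)
    - (1 + vv Ginv μ u Du ξ) ^ ((3 : ℝ) / 2) * Real.exp (u ξ) * K (Real.exp (u ξ)) ξ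

/-- Positive definiteness of the (inverse) metric components. -/
def PosDefFam (Ginv : S → Fin N → Fin N → ℝ) : Prop :=
  ∀ (ξ : S) (w : Fin N → ℝ), w ≠ 0 → 0 < ∑ a, ∑ b, Ginv ξ a b * w a * w b

/-- Encoding of the second-order maximum principle data of a `C²` function on the compact
manifold `Σ`: at a maximum point the gradient vanishes and the Hessian is negative
semidefinite, at a minimum point the gradient vanishes and the Hessian is positive
semidefinite. -/
def MaxPrincipleData (u : S → ℝ) (Du : S → Fin N → ℝ)
    (D2u : S → Fin N → Fin N → ℝ) : Prop :=
  (∀ ξ : S, (∀ η, u η ≤ u ξ) →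
      (∀ a, Du ξ a = 0) ∧ ∀ w : Fin N → ℝ, ∑ a, ∑ b, D2u ξ a b * w a * w b ≤ 0)
  ∧ (∀ ξ : S, (∀ η, u ξ ≤ u η) →
      (∀ a, Du ξ a = 0) ∧ ∀ w : Fin N → ℝ, 0 ≤ ∑ a, ∑ b, D2u ξ a b * w a * w b)

/-! At an extremum of `u` the gradient vanishes, so `v = 0` and the equation reduces to
`(m-1) - e^u K(e^u ξ) = e^{μ_a u} Gᵃᵇ e^{μ_b u} D_{ab}u`, a trace of the Hessian against a
positive semidefinite matrix. At a maximum this is `≤ 0`, contradicting `e^u K ≤ a₀(m-1)`;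
at a minimum it is `≥ 0`, contradicting `e^u K ≥ b₀(m-1)`. -/

open Finset Matrix Set

lemma Matrix.PosSemidef.sum_mul_nonneg {n : Type*} [Fintype n] {M H : Matrix n n ℝ}
    (hM : M.PosSemidef) (hH : ∀ w : n → ℝ, 0 ≤ ∑ a, ∑ b, H a b * w a * w b) :
    0 ≤ ∑ a, ∑ b, M a b * H a b := by
  obtain ⟨k, v, rfl⟩ := posSemidef_iff_eq_sum_vecMulVec.mp hM
  have hsplit : ∑ a, ∑ b, (∑ i, vecMulVec (v i) (star (v i)) : Matrix n n ℝ) a b * H a b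
      = ∑ i, ∑ a, ∑ b, H a b * v i a * v i b := by
    simp only [sum_apply, vecMulVec_apply, star_trivial, sum_mul]
    calc _ = ∑ a, ∑ i, ∑ b, H a b * v i a * v i b :=
          sum_congr rfl fun a _ => by
            rw [Finset.sum_comm]
            exact sum_congr rfl fun i _ => sum_congr rfl fun b _ => by ring
      _ = _ := Finset.sum_comm
  rw [hsplit]
  exact sum_nonneg fun i _ => hH (v i)

lemma Matrix.PosSemidef.sum_mul_nonpos {n : Type*} [Fintype n] {M H : Matrix n n ℝ}
    (hM : M.PosSemidef) (hH : ∀ w : n → ℝ, ∑ a, ∑ b, H a b * w a * w b ≤ 0) :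
    ∑ a, ∑ b, M a b * H a b ≤ 0 := by
  have := hM.sum_mul_nonneg (H := -H) fun w => by simpa using hH w
  simpa using this

section PrescribedMeanCurvature

variable {Ginv : S → Fin N → Fin N → ℝ} {μ : Fin N → ℝ} {u : S → ℝ}
  {Du : S → Fin N → ℝ} {D2u : S → Fin N → Fin N → ℝ} {ξ : S}

lemma PosDefFam.posDef (hG : PosDefFam Ginv) (hsymm : ∀ a b, Ginv ξ a b = Ginv ξ b a) :
    (Matrix.of (Ginv ξ)).PosDef := by
  refine PosDef.of_dotProduct_mulVec_pos (funext₂ fun a b => hsymm b a) fun w hw => ?_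
  have hquad : star w ⬝ᵥ (of (Ginv ξ) *ᵥ w) = ∑ a, ∑ b, Ginv ξ a b * w a * w b := by
    simp only [dotProduct, mulVec, of_apply, star_trivial, mul_sum]
    exact sum_congr rfl fun a _ => sum_congr rfl fun b _ => by ring
  exact hquad ▸ hG ξ w hw

def rescaledMetric (Ginv : S → Fin N → Fin N → ℝ) (μ : Fin N → ℝ) (u : S → ℝ) (ξ : S) :
    Matrix (Fin N) (Fin N) ℝ :=
  diagonal (fun a => Real.exp (μ a * u ξ)) * Matrix.of (Ginv ξ) *
    diagonal (fun a => Real.exp (μ a * u ξ))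

lemma rescaledMetric_posSemidef (hG : PosDefFam Ginv) (hsymm : ∀ a b, Ginv ξ a b = Ginv ξ b a) :
    (rescaledMetric Ginv μ u ξ).PosSemidef := by
  simpa [rescaledMetric] using
    (hG.posDef hsymm).posSemidef.mul_mul_conjTranspose_same
      (diagonal fun a => Real.exp (μ a * u ξ))

lemma vv_eq_zero_of_grad_eq_zero (hDu : Du ξ = 0) :
    vv1 Ginv μ u Du ξ = 0 ∧ vv2 Ginv μ u Du ξ = 0 := by
  simp [vv1, vv2, tDlow, hDu]

lemma MCop_eq_of_grad_eq_zero (hDu : Du ξ = 0) :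
    MCop Ginv μ u Du D2u ξ = ∑ a, ∑ b, rescaledMetric Ginv μ u ξ a b * D2u ξ a b := by
  obtain ⟨h1, h2⟩ := vv_eq_zero_of_grad_eq_zero (Ginv := Ginv) (μ := μ) (u := u) hDu
  refine sum_congr rfl fun a _ => sum_congr rfl fun b _ => ?_
  simp only [Acoef, vv, h1, h2, tDup, hDu, tD2, rescaledMetric, diagonal_mul, mul_diagonal,
    of_apply, add_mul, Real.exp_add, Pi.zero_apply, mul_zero, sum_const_zero]
  ring

lemma RHSK_eq_of_grad_eq_zero (m : ℕ) (K : ℝ → S → ℝ) (hDu : Du ξ = 0) :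
    RHSK m K Ginv μ u Du ξ = ((m : ℝ) - 1) - Real.exp (u ξ) * K (Real.exp (u ξ)) ξ := by
  obtain ⟨h1, h2⟩ := vv_eq_zero_of_grad_eq_zero (Ginv := Ginv) (μ := μ) (u := u) hDu
  simp [RHSK, vv, h1, h2]

lemma sub_one_le_exp_mul_of_isMax {m : ℕ} {K : ℝ → S → ℝ} (hG : PosDefFam Ginv)
    (hsymm : ∀ a b, Ginv ξ a b = Ginv ξ b a) (hsol : MaxPrincipleData u Du D2u)
    (heq : MCop Ginv μ u Du D2u ξ = RHSK m K Ginv μ u Du ξ) (hξ : ∀ η, u η ≤ u ξ) :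
    (m : ℝ) - 1 ≤ Real.exp (u ξ) * K (Real.exp (u ξ)) ξ := by
  obtain ⟨hDu, hHess⟩ := hsol.1 ξ hξ
  have htrace := (rescaledMetric_posSemidef (μ := μ) (u := u) hG hsymm).sum_mul_nonpos hHess
  rw [← MCop_eq_of_grad_eq_zero (funext hDu), heq, RHSK_eq_of_grad_eq_zero m K (funext hDu)]
    at htrace
  linarith

lemma exp_mul_le_sub_one_of_isMin {m : ℕ} {K : ℝ → S → ℝ} (hG : PosDefFam Ginv)
    (hsymm : ∀ a b, Ginv ξ a b = Ginv ξ b a) (hsol : MaxPrincipleData u Du D2u)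
    (heq : MCop Ginv μ u Du D2u ξ = RHSK m K Ginv μ u Du ξ) (hξ : ∀ η, u ξ ≤ u η) :
    Real.exp (u ξ) * K (Real.exp (u ξ)) ξ ≤ (m : ℝ) - 1 := by
  obtain ⟨hDu, hHess⟩ := hsol.2 ξ hξ
  have htrace := (rescaledMetric_posSemidef (μ := μ) (u := u) hG hsymm).sum_mul_nonneg hHess
  rw [← MCop_eq_of_grad_eq_zero (funext hDu), heq, RHSK_eq_of_grad_eq_zero m K (funext hDu)]
    at htrace
  linarith

end PrescribedMeanCurvature

theorem no_radial_graph_under_fast_decay_general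
    (n m : ℕ) (hm : 2 ≤ m) (S : Type) [TopologicalSpace S]
    [CompactSpace S] [Nonempty S]
    (μ : Fin (n + m - 1) → ℝ)
    (Ginv : S → Fin (n + m - 1) → Fin (n + m - 1) → ℝ)
    (hGsymm : ∀ ξ a b, Ginv ξ a b = Ginv ξ b a) (hGpos : PosDefFam Ginv)
    (K : ℝ → S → ℝ)
    (hdecay :
      (∃ a₀ : ℝ, 0 < a₀ ∧ a₀ < 1 ∧
        ∀ r : ℝ, 0 < r → ∀ ξ : S, K r ξ ≤ a₀ * ((m : ℝ) - 1) / r)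
      ∨ (∃ b₀ : ℝ, 1 < b₀ ∧
        ∀ r : ℝ, 0 < r → ∀ ξ : S, b₀ * ((m : ℝ) - 1) / r ≤ K r ξ)) :
    ¬ ∃ (u : S → ℝ) (Du : S → Fin (n + m - 1) → ℝ)
        (D2u : S → Fin (n + m - 1) → Fin (n + m - 1) → ℝ),
        Continuous u ∧ MaxPrincipleData u Du D2u ∧
        ∀ ξ : S, MCop Ginv μ u Du D2u ξ = RHSK m K Ginv μ u Du ξ := by
  rintro ⟨u, Du, D2u, hu, hsol, heq⟩
  have hm1 : (1 : ℝ) < m := by exact_mod_cast hm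
  rcases hdecay with ⟨a₀, -, ha₀, hK⟩ | ⟨b₀, hb₀, hK⟩
  · obtain ⟨ξ, -, hξ⟩ := isCompact_univ.exists_isMaxOn univ_nonempty hu.continuousOn
    have hlow := sub_one_le_exp_mul_of_isMax hGpos (hGsymm ξ) hsol (heq ξ)
      fun η => hξ (mem_univ η)
    have hup := (le_div_iff₀ (Real.exp_pos (u ξ))).mp (hK _ (Real.exp_pos (u ξ)) ξ)
    nlinarith
  · obtain ⟨ξ, -, hξ⟩ := isCompact_univ.exists_isMinOn univ_nonempty hu.continuousOn
    have hup := exp_mul_le_sub_one_of_isMin hGpos (hGsymm ξ) hsol (heq ξ)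
      fun η => hξ (mem_univ η)
    have hlow := (div_le_iff₀ (Real.exp_pos (u ξ))).mp (hK _ (Real.exp_pos (u ξ)) ξ)
    nlinarith

theorem no_radial_graph_under_fast_decay
    (n m : ℕ) (hn : 1 ≤ n) (hm : 2 ≤ m) (S : Type) [TopologicalSpace S]
    [CompactSpace S] [Nonempty S]
    (μ : Fin (n + m - 1) → ℝ) (hμ : ∀ a, μ a = 0 ∨ μ a = 1)
    (Ginv : S → Fin (n + m - 1) → Fin (n + m - 1) → ℝ)
    (hGsymm : ∀ ξ a b, Ginv ξ a b = Ginv ξ b a) (hGpos : PosDefFam Ginv)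
    (K : ℝ → S → ℝ) (hKpos : ∀ r : ℝ, 0 < r → ∀ ξ, 0 < K r ξ)
    (hdecay :
      (∃ a₀ : ℝ, 0 < a₀ ∧ a₀ < 1 ∧
        ∀ r : ℝ, 0 < r → ∀ ξ : S, K r ξ ≤ a₀ * ((m : ℝ) - 1) / r)
      ∨ (∃ b₀ : ℝ, 1 < b₀ ∧
        ∀ r : ℝ, 0 < r → ∀ ξ : S, b₀ * ((m : ℝ) - 1) / r ≤ K r ξ)) :
    ¬ ∃ (u : S → ℝ) (Du : S → Fin (n + m - 1) → ℝ)
        (D2u : S → Fin (n + m - 1) → Fin (n + m - 1) → ℝ),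
        Continuous u ∧ MaxPrincipleData u Du D2u ∧
        ∀ ξ : S, MCop Ginv μ u Du D2u ξ = RHSK m K Ginv μ u Du ξ :=
  no_radial_graph_under_fast_decay_general n m hm S μ Ginv hGsymm hGpos K hdecay
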